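/- The relation of being ω⃗-limitedly distant is an equivalence relation on the set of sequences ℕ → X. (Hence the hypernodes are partitioned into nodal ω⃗-galaxies, Section 3.) -/

import Mathlib

/-!
The triangle inequality bounds `d (x n) (z n)` by `ω ^ μ ♯ ω ^ ν`, so transitivity comes down to
every power `ω ^ c` being closed under the natural sum. At a successor `c + 1`, write
`a = ω ^ c * q + r` and `b = ω ^ c * s + t` with `r, t < ω ^ c`; induction on `(a, b)` gives
`a ♯ b ≤ ω ^ c * (q ♯ s) + (r ♯ t)`, and `q ♯ s` is finite because `a ♯ n = a + n` for `n : ℕ`.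
Limit exponents are immediate.
-/

open Filter Ordinal
open scoped Ordinal

universe u

namespace Ordinal

/-- Natural (Hessenberg) sum of ordinals, as defined in the Mathlib of December 2024
(`Ordinal.nadd`, since removed from Mathlib). -/
noncomputable def nadd (a b : Ordinal.{u}) : Ordinal.{u} :=
  max (⨆ x : Set.Iio a, Order.succ (nadd x.1 b)) (⨆ x : Set.Iio b, Order.succ (nadd a x.1))
termination_by (a, b)
decreasing_by all_goals cases x; decreasing_tactic

end Ordinal

infixl:65 " ♯ " => Ordinal.nadd

/-- Sequences `x, y : ℕ → X` are `ω⃗`-limitedly distant if there exists `μ ∈ ℕ` with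
`{n : d (x n) (y n) ≤ ω^μ} ∈ F`. -/
def ArrowOmegaLimitedlyDistant {X : Type*} (d : X → X → Ordinal) (F : Ultrafilter ℕ)
    (x y : ℕ → X) : Prop :=
  ∃ μ : ℕ, {n : ℕ | d (x n) (y n) ≤ ω ^ (μ : Ordinal)} ∈ F

namespace Ordinal

variable {a b c d : Ordinal.{u}}

theorem nadd_eq (a b : Ordinal.{u}) : a ♯ b =
    max (⨆ x : Set.Iio a, Order.succ (x.1 ♯ b)) (⨆ x : Set.Iio b, Order.succ (a ♯ x.1)) := by
  rw [nadd]

theorem nadd_lt_nadd_right (h : a < b) (c : Ordinal.{u}) : a ♯ c < b ♯ c := by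
  rw [nadd_eq b c]
  refine (Order.lt_succ (a ♯ c)).trans_le (le_max_of_le_left ?_)
  exact le_ciSup (f := fun x : Set.Iio b => Order.succ (x.1 ♯ c)) bddAbove_of_small ⟨a, h⟩

theorem nadd_lt_nadd_left (h : b < c) (a : Ordinal.{u}) : a ♯ b < a ♯ c := by
  rw [nadd_eq a c]
  refine (Order.lt_succ (a ♯ b)).trans_le (le_max_of_le_right ?_)
  exact le_ciSup (f := fun x : Set.Iio c => Order.succ (a ♯ x.1)) bddAbove_of_small ⟨b, h⟩

theorem nadd_le_nadd (hab : a ≤ b) (hcd : c ≤ d) : a ♯ c ≤ b ♯ d :=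
  calc a ♯ c ≤ b ♯ c := (StrictMono.monotone fun _ _ h => nadd_lt_nadd_right h c) hab
    _ ≤ b ♯ d := (StrictMono.monotone fun _ _ h => nadd_lt_nadd_left h b) hcd

theorem nadd_le_iff : a ♯ b ≤ c ↔ (∀ a' < a, a' ♯ b < c) ∧ (∀ b' < b, a ♯ b' < c) := by
  refine ⟨fun h => ⟨fun a' ha => (nadd_lt_nadd_right ha b).trans_le h,
    fun b' hb => (nadd_lt_nadd_left hb a).trans_le h⟩, fun ⟨ha, hb⟩ => ?_⟩
  rw [nadd_eq]
  exact max_le (ciSup_le' fun x => Order.succ_le_of_lt (ha _ x.2))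
    (ciSup_le' fun x => Order.succ_le_of_lt (hb _ x.2))

theorem nadd_comm (a b : Ordinal.{u}) : a ♯ b = b ♯ a := by
  induction a using WellFoundedLT.induction generalizing b with | _ a iha =>
  induction b using WellFoundedLT.induction with | _ b ihb =>
  rw [nadd_eq, nadd_eq b a, max_comm]
  congr 1 <;> congr 1 <;> funext x
  · rw [ihb x.1 x.2]
  · rw [iha x.1 x.2]

theorem nadd_zero (a : Ordinal.{u}) : a ♯ 0 = a := by
  induction a using WellFoundedLT.induction with | _ a ih =>
  refine le_antisymm (nadd_le_iff.2 ⟨fun a' ha => (ih a' ha).trans_lt ha, by simp⟩) ?_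
  exact StrictMono.le_apply fun _ _ h => nadd_lt_nadd_right h 0

theorem nadd_add_one (a b : Ordinal.{u}) : a ♯ (b + 1) = a ♯ b + 1 := by
  induction a using WellFoundedLT.induction with | _ a ih =>
  refine le_antisymm (nadd_le_iff.2 ⟨fun a' ha => ?_, fun b' hb => ?_⟩) ?_
  · rw [ih a' ha]
    simpa using nadd_lt_nadd_right ha b
  · exact Order.lt_add_one_iff.2 (nadd_le_nadd le_rfl (Order.lt_add_one_iff.1 hb))
  · exact Order.add_one_le_of_lt (nadd_lt_nadd_left (lt_add_one b) a)

theorem nadd_natCast (a : Ordinal.{u}) (n : ℕ) : a ♯ n = a + n := by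
  induction n with
  | zero => simp [nadd_zero]
  | succ n ih => rw [Nat.cast_succ, nadd_add_one, ih, add_assoc]

theorem isPrincipal_nadd_omega0 : IsPrincipal (· ♯ ·) ω := by
  intro a b ha hb
  obtain ⟨n, rfl⟩ := lt_omega0.1 hb
  simpa only [nadd_natCast] using isPrincipal_add_omega0 ha hb

theorem div_lt_div_or_mod_lt_of_lt (h : a < b) (c : Ordinal.{u}) :
    a / c < b / c ∨ a / c = b / c ∧ a % c < b % c := by
  refine (div_le_left h.le c).lt_or_eq.imp_right fun hq => ⟨hq, ?_⟩
  rw [← div_add_mod a c, ← div_add_mod b c, hq] at h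
  exact (add_lt_add_iff_left _).1 h

variable {P : Ordinal.{u}}

theorem mul_nadd_add_nadd_lt_of_lex (hP : IsPrincipal (· ♯ ·) P) {q q' s r r' t : Ordinal.{u}}
    (hr' : r' < P) (ht : t < P) (h : q' < q ∨ q' = q ∧ r' < r) :
    P * (q' ♯ s) + (r' ♯ t) < P * (q ♯ s) + (r ♯ t) := by
  rcases h with hq | ⟨rfl, hr⟩
  · calc P * (q' ♯ s) + (r' ♯ t) < P * (q' ♯ s) + P := add_lt_add_right (hP hr' ht) _
      _ = P * (q' ♯ s + 1) := (mul_add_one _ _).symm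
      _ ≤ P * (q ♯ s) := mul_le_mul_right (Order.add_one_le_of_lt (nadd_lt_nadd_right hq s)) P
      _ ≤ P * (q ♯ s) + (r ♯ t) := le_self_add
  · exact add_lt_add_right (nadd_lt_nadd_right hr t) _

theorem nadd_le_mul_div_nadd_add_mod_nadd (hP : IsPrincipal (· ♯ ·) P) (a b : Ordinal.{u}) :
    a ♯ b ≤ P * (a / P ♯ b / P) + (a % P ♯ b % P) := by
  rcases eq_or_ne P 0 with rfl | hP0
  · simp -- `a / 0 = 0` and `a % 0 = a`
  induction a using WellFoundedLT.induction generalizing b with | _ a iha =>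
  induction b using WellFoundedLT.induction with | _ b ihb =>
  refine nadd_le_iff.2
    ⟨fun a' ha => (iha a' ha b).trans_lt ?_, fun b' hb => (ihb b' hb).trans_lt ?_⟩
  · exact mul_nadd_add_nadd_lt_of_lex hP (mod_lt _ hP0) (mod_lt _ hP0)
      (div_lt_div_or_mod_lt_of_lt ha P)
  · rw [nadd_comm (a / P), nadd_comm (a % P), nadd_comm (a / P), nadd_comm (a % P)]
    exact mul_nadd_add_nadd_lt_of_lex hP (mod_lt _ hP0) (mod_lt _ hP0)
      (div_lt_div_or_mod_lt_of_lt hb P)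

theorem isPrincipal_nadd_omega0_opow (c : Ordinal.{u}) : IsPrincipal (· ♯ ·) (ω ^ c) := by
  induction c using limitRecOn with
  | zero => simp [nadd_zero]
  | add_one c ih =>
    intro a b ha hb
    have hP : 0 < ω ^ c := opow_pos c omega0_pos
    rw [opow_add_one] at ha hb ⊢
    have hq : a / ω ^ c ♯ b / ω ^ c < ω :=
      isPrincipal_nadd_omega0 ((lt_mul_iff_div_lt hP.ne').1 ha) ((lt_mul_iff_div_lt hP.ne').1 hb)
    calc a ♯ b ≤ ω ^ c * (a / ω ^ c ♯ b / ω ^ c) + (a % ω ^ c ♯ b % ω ^ c) :=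
          nadd_le_mul_div_nadd_add_mod_nadd ih a b
      _ < ω ^ c * (a / ω ^ c ♯ b / ω ^ c) + ω ^ c :=
          add_lt_add_right (ih (mod_lt a hP.ne') (mod_lt b hP.ne')) _
      _ = ω ^ c * (a / ω ^ c ♯ b / ω ^ c + 1) := (mul_add_one _ _).symm
      _ < ω ^ c * ω := (mul_lt_mul_iff_right₀ hP).2 (isSuccLimit_omega0.add_one_lt hq)
  | limit c hc ih =>
    intro a b ha hb
    obtain ⟨c₁, hc₁, ha⟩ := ((isNormal_opow one_lt_omega0).lt_iff_exists_lt hc).1 ha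
    obtain ⟨c₂, hc₂, hb⟩ := ((isNormal_opow one_lt_omega0).lt_iff_exists_lt hc).1 hb
    have hmono := (isNormal_opow one_lt_omega0).strictMono
    calc a ♯ b < ω ^ max c₁ c₂ := ih _ (max_lt hc₁ hc₂)
          (ha.trans_le (hmono.monotone (le_max_left _ _)))
          (hb.trans_le (hmono.monotone (le_max_right _ _)))
      _ < ω ^ c := hmono (max_lt hc₁ hc₂)

end Ordinal

namespace ArrowOmegaLimitedlyDistant

variable {X : Type*} {d : X → X → Ordinal} {F : Ultrafilter ℕ} {x y z : ℕ → X}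

theorem refl (hd : ∀ a, d a a = 0) (x : ℕ → X) : ArrowOmegaLimitedlyDistant d F x x :=
  ⟨0, univ_mem' fun n => by simp [hd]⟩

theorem symm (hd : ∀ a b, d a b = d b a) (h : ArrowOmegaLimitedlyDistant d F x y) :
    ArrowOmegaLimitedlyDistant d F y x := by
  simpa only [ArrowOmegaLimitedlyDistant, hd (y _)] using h

theorem trans (hd : ∀ a b c, d a c ≤ d a b ♯ d b c) (hxy : ArrowOmegaLimitedlyDistant d F x y)
    (hyz : ArrowOmegaLimitedlyDistant d F y z) : ArrowOmegaLimitedlyDistant d F x z := by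
  obtain ⟨μ, hμ⟩ := hxy
  obtain ⟨ν, hν⟩ := hyz
  have opow_lt {k : ℕ} (hk : k ≤ max μ ν) : ω ^ (k : Ordinal) < ω ^ ((max μ ν + 1 : ℕ) : Ordinal) :=
    (opow_lt_opow_iff_right one_lt_omega0).2 (by exact_mod_cast Nat.lt_succ_of_le hk)
  refine ⟨max μ ν + 1, ?_⟩
  filter_upwards [hμ, hν] with n hxyn hyzn
  calc d (x n) (z n) ≤ d (x n) (y n) ♯ d (y n) (z n) := hd _ _ _
    _ ≤ ω ^ (μ : Ordinal) ♯ ω ^ (ν : Ordinal) := nadd_le_nadd hxyn hyzn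
    _ ≤ ω ^ ((max μ ν + 1 : ℕ) : Ordinal) :=
      (isPrincipal_nadd_omega0_opow _ (opow_lt (le_max_left μ ν))
        (opow_lt (le_max_right μ ν))).le

end ArrowOmegaLimitedlyDistant

theorem arrowOmegaLimitedlyDistant_equivalence_general
    (X : Type*) (d : X → X → Ordinal)
    (hd0 : ∀ a b : X, d a b = 0 ↔ a = b)
    (hdsymm : ∀ a b : X, d a b = d b a)
    (hdtri : ∀ a b c : X, d a c ≤ d a b ♯ d b c)
    (F : Ultrafilter ℕ) :
    (∀ x : ℕ → X, ArrowOmegaLimitedlyDistant d F x x) ∧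
    (∀ x y : ℕ → X, ArrowOmegaLimitedlyDistant d F x y → ArrowOmegaLimitedlyDistant d F y x) ∧
    (∀ x y z : ℕ → X, ArrowOmegaLimitedlyDistant d F x y → ArrowOmegaLimitedlyDistant d F y z →
      ArrowOmegaLimitedlyDistant d F x z) :=
  ⟨.refl fun a => (hd0 a a).2 rfl, fun _ _ => .symm hdsymm, fun _ _ _ => .trans hdtri⟩

theorem arrowOmegaLimitedlyDistant_equivalence
    (X : Type*) (d : X → X → Ordinal)
    (hd0 : ∀ a b : X, d a b = 0 ↔ a = b)
    (hdsymm : ∀ a b : X, d a b = d b a)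
    (hdtri : ∀ a b c : X, d a c ≤ d a b ♯ d b c)
    (F : Ultrafilter ℕ) (hF : ∀ s : Set ℕ, sᶜ.Finite → s ∈ F) :
    (∀ x : ℕ → X, ArrowOmegaLimitedlyDistant d F x x) ∧
    (∀ x y : ℕ → X, ArrowOmegaLimitedlyDistant d F x y → ArrowOmegaLimitedlyDistant d F y x) ∧
    (∀ x y z : ℕ → X, ArrowOmegaLimitedlyDistant d F x y → ArrowOmegaLimitedlyDistant d F y z →
      ArrowOmegaLimitedlyDistant d F x z) :=
  arrowOmegaLimitedlyDistant_equivalence_general X d hd0 hdsymm hdtri F
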